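/- Let K be a field, V a finite-dimensional K-vector space, V₀ ⊆ V a subspace, and P = {g ∈ GL(V) : g(V₀) = V₀} its stabilizer. If s ∈ GL(V) satisfies s·P·s⁻¹ = P, then s(V₀) = V₀. -/

import Mathlib

/-!
Conjugating by `s` turns the hypothesis into: every automorphism stabilizing `V₀` stabilizes
`W = s⁻¹(V₀)`. If neither of `V₀`, `W` contained the other, pick `w ∈ W \ V₀`, `v ∈ V₀ \ W` and a
linear form `f` vanishing on `V₀` with `f w ≠ 0`; the transvection `x ↦ x + f x • v` stabilizes
`V₀` but sends `w` to `w + f w • v ∉ W`. So `V₀` and `W` are comparable, and having the same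
dimension they coincide.
-/

open Module

namespace Submodule

theorem map_transvection_eq_self {R V : Type*} [Ring R] [AddCommGroup V] [Module R V]
    {p : Submodule R V} {f : Dual R V} {v : V} (hfv : f v = 0) (hv : v ∈ p) :
    p.map (LinearEquiv.transvection hfv : V →ₗ[R] V) = p := by
  have mem {c : V} (hc : c ∈ p) {x : V} (hx : x ∈ p) : x + f x • c ∈ p :=
    p.add_mem hx (p.smul_mem _ hc)
  refine le_antisymm (map_le_iff_le_comap.2 fun x hx ↦ mem hv hx) fun x hx ↦ ?_
  rw [map_equiv_eq_comap_symm, LinearEquiv.transvection.symm_eq hfv (by simp [hfv])]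
  exact mem (p.neg_mem hv) hx

theorem map_conj_eq_self_iff {R M : Type*} [Semiring R] [AddCommMonoid M] [Module R M]
    (e g : M ≃ₗ[R] M) (p : Submodule R M) :
    p.map ((e * g * e⁻¹ : M ≃ₗ[R] M) : M →ₗ[R] M) = p ↔
      (p.map (e.symm : M →ₗ[R] M)).map (g : M →ₗ[R] M) = p.map (e.symm : M →ₗ[R] M) := by
  rw [iff_comm, ← (map_injective_of_injective e.injective).eq_iff, (map_symm_eq_iff e).1 rfl,
    ← map_comp, ← map_comp]
  rfl

theorem le_or_le_of_forall_map_eq {K V : Type*} [DivisionRing K] [AddCommGroup V] [Module K V]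
    {p q : Submodule K V}
    (h : ∀ g : V ≃ₗ[K] V, p.map (g : V →ₗ[K] V) = p → q.map (g : V →ₗ[K] V) = q) :
    q ≤ p ∨ p ≤ q := by
  by_contra! hpq
  obtain ⟨w, hwq, hwp⟩ := SetLike.not_le_iff_exists.1 hpq.1
  obtain ⟨v, hvp, hvq⟩ := SetLike.not_le_iff_exists.1 hpq.2
  obtain ⟨f, hfw, hfp⟩ := exists_dual_map_eq_bot_of_notMem hwp inferInstance
  have hfv : f v = 0 := (mem_bot K).1 (hfp ▸ mem_map_of_mem hvp)
  have hq := h _ (map_transvection_eq_self hfv hvp)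
  have hτw : w + f w • v ∈ q := hq ▸ mem_map_of_mem hwq
  exact hvq <| (q.smul_mem_iff hfw).1 <| (q.add_mem_iff_right hwq).1 hτw

end Submodule

theorem stabilizer_self_normalizing {K : Type*} [Field K] {V : Type*}
    [AddCommGroup V] [Module K V] [FiniteDimensional K V]
    (V₀ : Submodule K V) (s : V ≃ₗ[K] V)
    (hs : ∀ g : V ≃ₗ[K] V,
      Submodule.map ((s * g * s⁻¹ : V ≃ₗ[K] V) : V →ₗ[K] V) V₀ = V₀ ↔
        Submodule.map (g : V →ₗ[K] V) V₀ = V₀) :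
    Submodule.map (s : V →ₗ[K] V) V₀ = V₀ := by
  set W := V₀.map (s.symm : V →ₗ[K] V)
  have hrank : finrank K W = finrank K V₀ := LinearEquiv.finrank_map_eq s.symm V₀
  have hW : W = V₀ := by
    rcases Submodule.le_or_le_of_forall_map_eq
        fun g ↦ (Submodule.map_conj_eq_self_iff s g V₀).1 ∘ (hs g).2 with h | h
    · exact Submodule.eq_of_le_of_finrank_eq h hrank
    · exact (Submodule.eq_of_le_of_finrank_eq h hrank.symm).symm
  exact (Submodule.map_symm_eq_iff s).1 hW
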